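/- Let D be an integral domain with quotient field K, let A be a D-torsion-free D-algebra, and let w_D(A) be the smallest WPC D-subalgebra of A ⊗_D K containing the image of A. Then w_D satisfies the left adjoint universal property: every D-algebra homomorphism from A to a D-torsion-free WPC D-algebra B extends uniquely to a D-algebra homomorphism w_D(A) → B. -/

import Mathlib

/-!
Clearing the denominators of `f ∈ K[X]` by some `d ∈ D⁰` turns `f(x)` into a `D`-polynomial
expression in `x`, up to the factor `d`, which is invertible in every `K`-algebra. Hence two
`D`-algebra maps from `w_D(A)` to a `K`-algebra have a WPC equalizer, so they agree once they agree
on `A`; applied inside `K ⊗ B`, into which the torsion-free `B` embeds, this gives uniqueness.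
For existence, `K ⊗ ψ` sends `w_D(A)` into the image of `B`, because the preimage of that image is
WPC (as `B` is) and contains `A`.
-/

set_option linter.unusedSectionVars false
open Polynomial TensorProduct

variable (D K : Type*) [CommRing D] [IsDomain D] [Field K] [Algebra D K] [IsFractionRing D K]

/-- The ring of integer-valued polynomials `Int(D) ⊆ K[X]`. -/
noncomputable def IntD : Subalgebra D (Polynomial K) :=
  ⨅ a : D, Subalgebra.comap ((Polynomial.aeval (algebraMap D K a)).restrictScalars D)
    (Algebra.ofId D K).range

theorem mem_IntD {f : Polynomial K} :
    f ∈ IntD D K ↔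
      ∀ a : D, ∃ d : D, algebraMap D K d = Polynomial.eval (algebraMap D K a) f := by
  simp [IntD, Algebra.mem_iInf, Subalgebra.mem_comap, Algebra.ofId_apply, Algebra.mem_bot,
    Set.mem_range]

/-- `X` as an element of `Int(D)`. -/
noncomputable def Xint : IntD D K := ⟨Polynomial.X, (mem_IntD D K).mpr fun a => ⟨a, by simp⟩⟩

/-- A `D`-subalgebra of `K ⊗[D] A` is WPC if it is closed under evaluation of
integer-valued polynomials. -/
def WPCT (A : Type*) [CommRing A] [Algebra D A] (S : Subalgebra D (K ⊗[D] A)) : Prop :=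
  ∀ f ∈ IntD D K, ∀ x ∈ S, Polynomial.aeval x f ∈ S

/-- `w_D(A)`: the intersection of all WPC subalgebras of `K ⊗[D] A` containing the image of `A`. -/
noncomputable def wD (A : Type*) [CommRing A] [Algebra D A] : Subalgebra D (K ⊗[D] A) :=
  sInf {S | WPCT D K A S ∧
    (Algebra.TensorProduct.includeRight : A →ₐ[D] K ⊗[D] A).range ≤ S}

/-- The canonical map `A → w_D(A)`, `a ↦ 1 ⊗ a`. -/
noncomputable def toWD (A : Type*) [CommRing A] [Algebra D A] : A →ₐ[D] wD D K A :=
  AlgHom.codRestrict (Algebra.TensorProduct.includeRight : A →ₐ[D] K ⊗[D] A) (wD D K A)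
    (fun a => (Algebra.mem_sInf).mpr fun _ hS => hS.2 (AlgHom.mem_range_self _ a))

section ClearingDenominators

variable {R L T : Type*} [CommRing R] [CommRing L] [Algebra R L] [IsFractionRing R L]
  [CommRing T] [Algebra L T] [Algebra R T] [IsScalarTower R L T]

theorem exists_smul_aeval_eq_aeval (f : L[X]) :
    ∃ d ∈ nonZeroDivisors R, ∃ g : R[X], ∀ x : T, d • aeval x f = aeval x g := by
  obtain ⟨d, hd, hg⟩ := IsLocalization.integerNormalization_spec (nonZeroDivisors R) f
  refine ⟨d, hd, IsLocalization.integerNormalization (nonZeroDivisors R) f, fun x => ?_⟩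
  rw [← aeval_map_algebraMap L x (IsLocalization.integerNormalization _ f), hg,
    ← algebraMap_smul L d f, map_smul, algebraMap_smul]

theorem Subalgebra.algHom_apply_eq_of_coe_eq_aeval {S : Subalgebra R T} {M : Type*} [CommRing M]
    [Algebra L M] [Algebra R M] [IsScalarTower R L M] (F₁ F₂ : S →ₐ[R] M) {x z : S} (f : L[X])
    (hz : (z : T) = aeval (x : T) f) (hx : F₁ x = F₂ x) : F₁ z = F₂ z := by
  obtain ⟨d, hd, g, hg⟩ := exists_smul_aeval_eq_aeval (R := R) (T := T) f
  have hdz : d • z = aeval x g := Subtype.ext <| by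
    rw [Subalgebra.coe_smul, hz, hg]
    exact aeval_algHom_apply S.val x g
  -- `d` acts on the `L`-module `M` through the unit `algebraMap R L d`.
  have hcancel : Function.Injective (d • · : M → M) := fun _ _ h =>
    ((IsLocalization.map_units L (⟨d, hd⟩ : nonZeroDivisors R)).smul_left_cancel).mp <| by
      simpa only [algebraMap_smul] using h
  apply hcancel
  simp only [← map_smul, hdz, ← aeval_algHom_apply, hx]

end ClearingDenominators

theorem AlgHom.exists_comp_eq_of_range_le {R A B C : Type*} [CommSemiring R] [Semiring A]
    [Algebra R A] [Semiring B] [Algebra R B] [Semiring C] [Algebra R C] {ι : B →ₐ[R] C}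
    (hι : Function.Injective ι) {F : A →ₐ[R] C} (h : F.range ≤ ι.range) :
    ∃ Φ : A →ₐ[R] B, ι.comp Φ = F := by
  let e := AlgEquiv.ofInjective ι hι
  let G := F.codRestrict ι.range fun x => h ⟨x, rfl⟩
  exact ⟨e.symm.toAlgHom.comp G,
    AlgHom.ext fun x => congrArg Subtype.val (e.apply_symm_apply (G x))⟩

theorem includeRight_injective_of_noZeroSMulDivisors (B : Type*) [CommRing B] [Algebra D B]
    [NoZeroSMulDivisors D B] :
    Function.Injective (Algebra.TensorProduct.includeRight : B →ₐ[D] K ⊗[D] B) :=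
  (IsLocalizedModule.injective_iff_isRegular (nonZeroDivisors D) (TensorProduct.mk D K B 1)).mpr
    fun c => (IsRegular.of_ne_zero (nonZeroDivisors.coe_ne_zero c)).isSMulRegular

section wD

variable {A : Type*} [CommRing A] [Algebra D A]

theorem isWPC_wD : WPCT D K A (wD D K A) := fun f hf _ hx =>
  Algebra.mem_sInf.mpr fun S hS => hS.1 f hf _ (Algebra.mem_sInf.mp hx S hS)

theorem wD_le {S : Subalgebra D (K ⊗[D] A)} (hS : WPCT D K A S)
    (hA : (Algebra.TensorProduct.includeRight : A →ₐ[D] K ⊗[D] A).range ≤ S) : wD D K A ≤ S :=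
  sInf_le ⟨hS, hA⟩

theorem wD_le_comap {T : Type*} [CommRing T] [Algebra K T] [Algebra D T] [IsScalarTower D K T]
    (Ψ : K ⊗[D] A →ₐ[K] T) (U : Subalgebra D T) (hU : ∀ f ∈ IntD D K, ∀ u ∈ U, aeval u f ∈ U)
    (hA : ∀ a : A, Ψ (1 ⊗ₜ a) ∈ U) : wD D K A ≤ U.comap (Ψ.restrictScalars D) := by
  refine wD_le D K (fun f hf x hx => ?_) ?_
  · show Ψ (aeval x f) ∈ U
    rw [← aeval_algHom_apply]
    exact hU f hf _ hx
  · rintro _ ⟨a, rfl⟩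
    exact hA a

theorem wD_algHom_ext {M : Type*} [CommRing M] [Algebra K M] [Algebra D M] [IsScalarTower D K M]
    {F₁ F₂ : wD D K A →ₐ[D] M} (h : F₁.comp (toWD D K A) = F₂.comp (toWD D K A)) : F₁ = F₂ := by
  let E : Subalgebra D (K ⊗[D] A) := (AlgHom.equalizer F₁ F₂).map (wD D K A).val
  have hE : wD D K A ≤ E := by
    refine wD_le D K ?_ ?_
    · rintro f hf _ ⟨x, hx, rfl⟩
      refine ⟨⟨_, isWPC_wD D K f hf x x.2⟩, ?_, rfl⟩
      exact Subalgebra.algHom_apply_eq_of_coe_eq_aeval F₁ F₂ f rfl hx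
    · rintro _ ⟨a, rfl⟩
      exact ⟨toWD D K A a, AlgHom.congr_fun h a, rfl⟩
  ext x
  obtain ⟨y, hy, hyx⟩ := hE x.2
  rwa [← Subtype.ext hyx]

end wD

theorem stmt_19 (A : Type*) [CommRing A] [Algebra D A]
    (B : Type*) [CommRing B] [Algebra D B] [NoZeroSMulDivisors D B]
    (hB : ∀ f ∈ IntD D K, ∀ b : B, ∃ b' : B,
      Polynomial.aeval ((1 : K) ⊗ₜ[D] b) f = (1 : K) ⊗ₜ[D] b')
    (ψ : A →ₐ[D] B) :
    ∃! Φ : wD D K A →ₐ[D] B, Φ.comp (toWD D K A) = ψ := by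
  let ι : B →ₐ[D] K ⊗[D] B := Algebra.TensorProduct.includeRight
  have hι : Function.Injective ι := includeRight_injective_of_noZeroSMulDivisors D K B
  let ψK : K ⊗[D] A →ₐ[K] K ⊗[D] B := Algebra.TensorProduct.map (AlgHom.id K K) ψ
  have hrange : ((ψK.restrictScalars D).comp (wD D K A).val).range ≤ ι.range := by
    have hU : ∀ f ∈ IntD D K, ∀ u ∈ ι.range, aeval u f ∈ ι.range := by
      rintro f hf _ ⟨b, rfl⟩
      obtain ⟨b', hb'⟩ := hB f hf b
      exact ⟨b', hb'.symm⟩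
    rintro _ ⟨x, rfl⟩
    exact wD_le_comap D K ψK ι.range hU
      (fun a => ⟨ψ a, (Algebra.TensorProduct.map_tmul (AlgHom.id K K) ψ 1 a).symm⟩) x.2
  obtain ⟨Φ, hΦ⟩ := AlgHom.exists_comp_eq_of_range_le hι hrange
  have hΦψ : Φ.comp (toWD D K A) = ψ := AlgHom.ext fun a => hι <| by
    rw [AlgHom.comp_apply, ← AlgHom.comp_apply ι, hΦ]
    exact Algebra.TensorProduct.map_tmul _ _ 1 a
  refine ⟨Φ, hΦψ, fun Φ' hΦ' => AlgHom.ext fun x => hι ?_⟩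
  have hext : ι.comp Φ' = ι.comp Φ :=
    wD_algHom_ext D K (by rw [AlgHom.comp_assoc, AlgHom.comp_assoc, hΦ', hΦψ])
  exact AlgHom.congr_fun hext x
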